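/- Let B_l, for l ∈ ℤ, be independent Bernoulli random variables with Pr{B_l = 1} = 1/(1 + e^{λ 2^l}) for a fixed λ > 0. Then the random variable B = Σ_{l=-∞}^{∞} 2^l B_l is exponentially distributed with rate λ (mean 1/λ). -/

import Mathlib

/-
The Laplace transform of `B` is an infinite product. Writing `x = 2 ^ l` and
`ψ x = oneSubExpRatio λ (λ - t) x = (1 - e^{-λx}) / (1 - e^{-(λ-t)x})`, the `l`-th factor
`E[e^{t x B_l}]` equals `ψ x / ψ (2x)`, so the product over `-k ≤ l < k` telescopes to
`ψ (2^{-k}) / ψ (2^k)`, which tends to `(λ / (λ - t)) / 1`, the Laplace transform of the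
exponential law.
A law on `[0, ∞)` is determined by its Laplace transform at the integers: the push-forward by
`x ↦ e^{-x}` turns these values into the moments of a law on `[0, 1]`, and moments determine such a
law by the Weierstrass approximation theorem.
-/

open MeasureTheory ProbabilityTheory Real Set Filter Topology

theorem MeasureTheory.Measure.ext_of_integral_pow_eq_of_ae_mem_Icc {μ ν : Measure ℝ}
    [IsFiniteMeasure μ] [IsFiniteMeasure ν] {a b : ℝ} (hμ : ∀ᵐ x ∂μ, x ∈ Icc a b)
    (hν : ∀ᵐ x ∂ν, x ∈ Icc a b)
    (h : ∀ n : ℕ, ∫ x, x ^ n ∂μ = ∫ x, x ^ n ∂ν) : μ = ν := by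
  have hintegrable (ρ : Measure ℝ) [IsFiniteMeasure ρ] (hρ : ∀ᵐ x ∂ρ, x ∈ Icc a b)
      {f : ℝ → ℝ} (hf : Continuous f) : Integrable f ρ := by
    simpa [IntegrableOn, Measure.restrict_eq_self_of_ae_mem hρ] using
      hf.integrableOn_Icc (μ := ρ) (a := a) (b := b)
  have hpoly (p : Polynomial ℝ) : ∫ x, p.eval x ∂μ = ∫ x, p.eval x ∂ν := by
    induction p using Polynomial.induction_on' with
    | add p q hp hq =>
      simp only [Polynomial.eval_add]
      rw [integral_add (hintegrable μ hμ p.continuous) (hintegrable μ hμ q.continuous),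
        integral_add (hintegrable ν hν p.continuous) (hintegrable ν hν q.continuous), hp, hq]
    | monomial n c =>
      simp only [Polynomial.eval_monomial]
      rw [integral_const_mul, integral_const_mul, h n]
  apply ext_of_forall_integral_eq_of_IsFiniteMeasure
  intro f
  refine eq_of_forall_dist_le fun ε hε => ?_
  set M := μ.real univ + ν.real univ + 1
  have hM : 0 < M := by positivity
  obtain ⟨p, hp⟩ := exists_polynomial_near_of_continuousOn a b f f.continuous.continuousOn
    (ε / M) (div_pos hε hM)
  have happrox (ρ : Measure ℝ) [IsFiniteMeasure ρ] (hρ : ∀ᵐ x ∂ρ, x ∈ Icc a b) :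
      |∫ x, f x ∂ρ - ∫ x, p.eval x ∂ρ| ≤ ε / M * ρ.real univ := by
    rw [← integral_sub (hintegrable ρ hρ f.continuous) (hintegrable ρ hρ p.continuous),
      ← Real.norm_eq_abs]
    refine norm_integral_le_of_norm_le_const ?_
    filter_upwards [hρ] with x hx
    rw [Real.norm_eq_abs, abs_sub_comm]
    exact (hp x hx).le
  calc dist (∫ x, f x ∂μ) (∫ x, f x ∂ν)
      ≤ |∫ x, f x ∂μ - ∫ x, p.eval x ∂μ| + |∫ x, f x ∂ν - ∫ x, p.eval x ∂ν| := by
        rw [Real.dist_eq, ← sub_sub_sub_cancel_right _ _ (∫ x, p.eval x ∂μ), hpoly p]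
        exact abs_sub _ _
    _ ≤ ε / M * μ.real univ + ε / M * ν.real univ := add_le_add (happrox μ hμ) (happrox ν hν)
    _ ≤ ε := by
        rw [← mul_add, div_mul_eq_mul_div, div_le_iff₀ hM]
        nlinarith

theorem MeasureTheory.Measure.ext_of_mgf_neg_nat_eq {μ ν : Measure ℝ} [IsFiniteMeasure μ]
    [IsFiniteMeasure ν] (hμ : ∀ᵐ x ∂μ, 0 ≤ x) (hν : ∀ᵐ x ∂ν, 0 ≤ x)
    (h : ∀ n : ℕ, mgf id μ (-n) = mgf id ν (-n)) : μ = ν := by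
  have hΦ : MeasurableEmbedding fun x : ℝ => exp (-x) :=
    (by fun_prop : Measurable fun x : ℝ => exp (-x)).measurableEmbedding
      fun x y hxy => neg_injective (exp_injective hxy)
  have hsupp {ρ : Measure ℝ} (hρ : ∀ᵐ x ∂ρ, 0 ≤ x) :
      ∀ᵐ y ∂ρ.map (fun x => exp (-x)), y ∈ Icc 0 1 := by
    rw [hΦ.ae_map_iff]
    filter_upwards [hρ] with x hx
    exact ⟨(exp_pos _).le, exp_le_one_iff.mpr (neg_nonpos.mpr hx)⟩
  have hmoment (ρ : Measure ℝ) (n : ℕ) :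
      ∫ y, y ^ n ∂ρ.map (fun x => exp (-x)) = mgf id ρ (-n) := by
    rw [hΦ.integral_map, mgf]
    congr with x
    simp only [id, ← exp_nat_mul, neg_mul_comm]
  refine hΦ.map_injective (Measure.ext_of_integral_pow_eq_of_ae_mem_Icc (hsupp hμ) (hsupp hν)
    fun n => ?_)
  rw [hmoment, hmoment, h]

theorem expMeasure_eq_withDensity (r : ℝ) :
    expMeasure r = volume.withDensity (exponentialPDF r) := rfl

theorem measurable_exponentialPDF (r : ℝ) : Measurable (exponentialPDF r) :=
  (measurable_exponentialPDFReal r).ennreal_ofReal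

theorem ae_nonneg_expMeasure (r : ℝ) : ∀ᵐ x ∂expMeasure r, 0 ≤ x := by
  rw [expMeasure_eq_withDensity, ae_withDensity_iff (measurable_exponentialPDF r)]
  exact .of_forall fun x hx => not_lt.mp fun hneg => hx (exponentialPDF_of_neg hneg)

theorem mgf_id_expMeasure {r t : ℝ} (hr : 0 < r) (ht : t < r) :
    mgf id (expMeasure r) t = r / (r - t) := by
  have hrt : 0 < r - t := sub_pos.mpr ht
  have hdensity (x : ℝ) : exponentialPDF r x * ENNReal.ofReal (exp (t * x)) =
      ENNReal.ofReal (r / (r - t)) * exponentialPDF (r - t) x := by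
    rcases lt_or_ge x 0 with hx | hx
    · simp [exponentialPDF_of_neg hx]
    rw [exponentialPDF_of_nonneg hx, exponentialPDF_of_nonneg hx,
      ← ENNReal.ofReal_mul (by positivity), ← ENNReal.ofReal_mul (by positivity)]
    congr 1
    rw [mul_assoc, ← exp_add]
    field_simp
    ring_nf
  rw [mgf, integral_eq_lintegral_of_nonneg_ae (.of_forall fun x => (exp_pos _).le)
    (by fun_prop), expMeasure_eq_withDensity,
    lintegral_withDensity_eq_lintegral_mul _ (measurable_exponentialPDF r) (by fun_prop)]
  simp only [Pi.mul_apply, id, hdensity]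
  rw [lintegral_const_mul _ (measurable_exponentialPDF _),
    lintegral_exponentialPDF_eq_one hrt, mul_one, ENNReal.toReal_ofReal (by positivity)]

theorem mgf_const_mul_of_eq_zero_or_one {Ω : Type*} [MeasurableSpace Ω] {μ : Measure Ω}
    [IsProbabilityMeasure μ] {X : Ω → ℝ} (hX : Measurable X) (h01 : ∀ ω, X ω = 0 ∨ X ω = 1)
    (c t : ℝ) : mgf (fun ω => c * X ω) μ t = 1 + μ.real {ω | X ω = 1} * (exp (t * c) - 1) := by
  have hE : MeasurableSet {ω | X ω = 1} := hX (measurableSet_singleton 1)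
  have hindicator (ω : Ω) :
      exp (t * (c * X ω)) = 1 + {ω | X ω = 1}.indicator (fun _ => exp (t * c) - 1) ω := by
    rcases h01 ω with h | h <;> simp [h]
  simp only [mgf, hindicator]
  rw [integral_add (integrable_const 1) ((integrable_const _).indicator hE),
    integral_indicator_const _ hE]
  simp [mul_comm]

noncomputable def oneSubExpRatio (r q x : ℝ) : ℝ :=
  (1 - exp (-(r * x))) / (1 - exp (-(q * x)))

theorem one_sub_exp_neg_mul_ne_zero {a x : ℝ} (ha : a ≠ 0) (hx : x ≠ 0) :
    1 - exp (-(a * x)) ≠ 0 := by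
  rw [sub_ne_zero, ne_comm, Ne, exp_eq_one_iff]
  simp [ha, hx]

theorem oneSubExpRatio_ne_zero {r q x : ℝ} (hr : r ≠ 0) (hq : q ≠ 0) (hx : x ≠ 0) :
    oneSubExpRatio r q x ≠ 0 :=
  div_ne_zero (one_sub_exp_neg_mul_ne_zero hr hx) (one_sub_exp_neg_mul_ne_zero hq hx)

theorem oneSubExpRatio_div_two_mul {r q x : ℝ} (hr : r ≠ 0) (hq : q ≠ 0) (hx : x ≠ 0) :
    oneSubExpRatio r q x / oneSubExpRatio r q (2 * x) =
      (1 + exp (-(q * x))) / (1 + exp (-(r * x))) := by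
  have hsq (a : ℝ) : 1 - exp (-(a * (2 * x))) = (1 - exp (-(a * x))) * (1 + exp (-(a * x))) := by
    rw [show -(a * (2 * x)) = -(a * x) + -(a * x) by ring, exp_add]
    ring
  have hr' := one_sub_exp_neg_mul_ne_zero hr hx
  have hq' := one_sub_exp_neg_mul_ne_zero hq hx
  rw [oneSubExpRatio, oneSubExpRatio, hsq, hsq]
  generalize exp (-(r * x)) = A at *
  generalize exp (-(q * x)) = Q at *
  field_simp

theorem tendsto_oneSubExpRatio_atTop {r q : ℝ} (hr : 0 < r) (hq : 0 < q) :
    Tendsto (oneSubExpRatio r q) atTop (𝓝 1) := by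
  have hlim {a : ℝ} (ha : 0 < a) : Tendsto (fun x => 1 - exp (-(a * x))) atTop (𝓝 1) := by
    simpa using (tendsto_exp_neg_atTop_nhds_zero.comp
      (tendsto_id.const_mul_atTop ha)).const_sub 1
  rw [← div_one 1]
  exact (hlim hr).div (hlim hq) one_ne_zero

theorem tendsto_one_sub_exp_neg_mul_div (a : ℝ) :
    Tendsto (fun x => (1 - exp (-(a * x))) / x) (𝓝[≠] 0) (𝓝 a) := by
  have hderiv : HasDerivAt (fun x => 1 - exp (-(a * x))) a 0 := by
    simpa using (((hasDerivAt_id (0 : ℝ)).const_mul a).neg.exp).const_sub 1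
  refine (hasDerivAt_iff_tendsto_slope_zero.mp hderiv).congr fun x => ?_
  simp [div_eq_inv_mul]

theorem tendsto_oneSubExpRatio_nhdsNE_zero (r : ℝ) {q : ℝ} (hq : q ≠ 0) :
    Tendsto (oneSubExpRatio r q) (𝓝[≠] 0) (𝓝 (r / q)) := by
  refine ((tendsto_one_sub_exp_neg_mul_div r).div (tendsto_one_sub_exp_neg_mul_div q) hq).congr'
    ?_
  filter_upwards [self_mem_nhdsWithin] with x hx
  rw [Pi.div_apply, oneSubExpRatio, div_div_div_cancel_right₀ hx]

theorem tendsto_mgf_sum_of_nonneg {ι Ω : Type*} [Countable ι] [MeasurableSpace Ω]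
    {μ : Measure Ω} [IsFiniteMeasure μ] {X : ι → Ω → ℝ} (hX : ∀ i, Measurable (X i))
    (hX0 : ∀ i ω, 0 ≤ X i ω) (hsum : ∀ᵐ ω ∂μ, Summable fun i => X i ω) {t : ℝ} (ht : t ≤ 0) :
    Tendsto (fun F : Finset ι => mgf (∑ i ∈ F, X i) μ t) atTop
      (𝓝 (mgf (fun ω => ∑' i, X i ω) μ t)) := by
  refine tendsto_integral_filter_of_dominated_convergence (fun _ => 1) (.of_forall fun F => ?_)
    (.of_forall fun F => .of_forall fun ω => ?_) (integrable_const 1) ?_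
  · fun_prop
  · rw [norm_of_nonneg (exp_pos _).le, exp_le_one_iff, Finset.sum_apply]
    exact mul_nonpos_of_nonpos_of_nonneg ht (Finset.sum_nonneg fun i _ => hX0 i ω)
  · filter_upwards [hsum] with ω hω
    simp only [Finset.sum_apply]
    exact (continuous_exp.tendsto _).comp (hω.hasSum.const_mul t)

theorem zpow_two_mul_nonneg_of_eq_zero_or_one {Ω : Type*} {B : ℤ → Ω → ℝ}
    (hval : ∀ l ω, B l ω = 0 ∨ B l ω = 1) (l : ℤ) (ω : Ω) : 0 ≤ (2 : ℝ) ^ l * B l ω := by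
  rcases hval l ω with h | h <;> simp [h, zpow_nonneg]

section Bernoulli

variable {Ω : Type*} [MeasurableSpace Ω] {μ : Measure Ω} [IsProbabilityMeasure μ] {lam : ℝ}
  {B : ℤ → Ω → ℝ}

theorem mgf_zpow_two_mul_of_bernoulli (hlam : 0 < lam) (hmeas : ∀ l, Measurable (B l))
    (hval : ∀ l ω, B l ω = 0 ∨ B l ω = 1)
    (hber : ∀ l : ℤ, μ {ω | B l ω = 1} = ENNReal.ofReal (1 / (1 + exp (lam * 2 ^ l))))
    {t : ℝ} (ht : t < lam) (l : ℤ) :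
    mgf (fun ω => (2 : ℝ) ^ l * B l ω) μ t =
      oneSubExpRatio lam (lam - t) (2 ^ l) / oneSubExpRatio lam (lam - t) (2 ^ (l + 1)) := by
  rw [zpow_add_one₀ two_ne_zero, mul_comm _ (2 : ℝ),
    oneSubExpRatio_div_two_mul hlam.ne' (sub_pos.mpr ht).ne' (zpow_ne_zero l two_ne_zero),
    mgf_const_mul_of_eq_zero_or_one (hmeas l) (hval l), measureReal_def, hber,
    ENNReal.toReal_ofReal (by positivity)]
  rw [show -((lam - t) * 2 ^ l) = t * 2 ^ l + -(lam * 2 ^ l) by ring, exp_add, exp_neg]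
  have := exp_pos (lam * 2 ^ l)
  field_simp
  ring

theorem mgf_sum_Ico_neg_of_bernoulli (hlam : 0 < lam) (hmeas : ∀ l, Measurable (B l))
    (hval : ∀ l ω, B l ω = 0 ∨ B l ω = 1) (hindep : iIndepFun B μ)
    (hber : ∀ l : ℤ, μ {ω | B l ω = 1} = ENNReal.ofReal (1 / (1 + exp (lam * 2 ^ l))))
    {t : ℝ} (ht : t < lam) (k : ℕ) :
    mgf (∑ l ∈ Finset.Ico (-k : ℤ) k, fun ω => (2 : ℝ) ^ l * B l ω) μ t =
      oneSubExpRatio lam (lam - t) (2 ^ (-k : ℤ)) / oneSubExpRatio lam (lam - t) (2 ^ (k : ℤ)) := by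
  have hne (l : ℤ) : oneSubExpRatio lam (lam - t) (2 ^ l) ≠ 0 :=
    oneSubExpRatio_ne_zero hlam.ne' (sub_pos.mpr ht).ne' (zpow_ne_zero l two_ne_zero)
  have hindep' : iIndepFun (fun l ω => (2 : ℝ) ^ l * B l ω) μ :=
    hindep.comp (fun l x => (2 : ℝ) ^ l * x) fun l => measurable_const_mul _
  rw [hindep'.mgf_sum fun l => (hmeas l).const_mul _]
  simp only [mgf_zpow_two_mul_of_bernoulli hlam hmeas hval hber ht]
  simpa using congrArg Units.val (Finset.prod_Ico_int_div k fun l => Units.mk0 _ (hne l))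

theorem mgf_tsum_zpow_two_mul_of_bernoulli (hlam : 0 < lam) (hmeas : ∀ l, Measurable (B l))
    (hval : ∀ l ω, B l ω = 0 ∨ B l ω = 1) (hindep : iIndepFun B μ)
    (hber : ∀ l : ℤ, μ {ω | B l ω = 1} = ENNReal.ofReal (1 / (1 + exp (lam * 2 ^ l))))
    (hsum : ∀ᵐ ω ∂μ, Summable fun l : ℤ => (2 : ℝ) ^ l * B l ω) {t : ℝ} (ht : t ≤ 0) :
    mgf (fun ω => ∑' l : ℤ, (2 : ℝ) ^ l * B l ω) μ t = lam / (lam - t) := by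
  have hq : 0 < lam - t := by linarith
  have hpartial := (tendsto_mgf_sum_of_nonneg (fun l => (hmeas l).const_mul _)
    (zpow_two_mul_nonneg_of_eq_zero_or_one hval) hsum ht).comp
    (Finset.tendsto_Ico_neg (R := ℤ))
  refine tendsto_nhds_unique hpartial ?_
  simp only [Function.comp_def, mgf_sum_Ico_neg_of_bernoulli hlam hmeas hval hindep hber
    (ht.trans_lt hlam)]
  have hlarge : Tendsto (fun k : ℕ => (2 : ℝ) ^ (k : ℤ)) atTop atTop := by
    simpa using tendsto_pow_atTop_atTop_of_one_lt one_lt_two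
  have hsmall : Tendsto (fun k : ℕ => (2 : ℝ) ^ (-k : ℤ)) atTop (𝓝[≠] 0) := by
    simp only [zpow_neg]
    exact tendsto_nhdsWithin_mono_right (fun x hx => ne_of_gt hx)
      (tendsto_inv_atTop_nhdsGT_zero.comp hlarge)
  rw [← div_one (lam / (lam - t))]
  exact ((tendsto_oneSubExpRatio_nhdsNE_zero lam hq.ne').comp hsmall).div
    ((tendsto_oneSubExpRatio_atTop hlam hq).comp hlarge) one_ne_zero

end Bernoulli

theorem stmt_0 {Ω : Type*} [MeasurableSpace Ω] (μ : Measure Ω) [IsProbabilityMeasure μ]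
    (lam : ℝ) (hlam : 0 < lam) (B : ℤ → Ω → ℝ)
    (hmeas : ∀ l, Measurable (B l))
    (hval : ∀ l ω, B l ω = 0 ∨ B l ω = 1)
    (hindep : iIndepFun B μ)
    (hber : ∀ l : ℤ,
      μ {ω | B l ω = 1} = ENNReal.ofReal (1 / (1 + Real.exp (lam * 2 ^ l))))
    (hsum : ∀ᵐ ω ∂μ, Summable fun l : ℤ => (2 : ℝ) ^ l * B l ω) :
    μ.map (fun ω => ∑' l : ℤ, (2 : ℝ) ^ l * B l ω) = expMeasure lam := by
  have hS : Measurable fun ω => ∑' l : ℤ, (2 : ℝ) ^ l * B l ω :=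
    Measurable.tsum fun l => (hmeas l).const_mul _
  have := isProbabilityMeasure_expMeasure hlam
  refine Measure.ext_of_mgf_neg_nat_eq ?_ (ae_nonneg_expMeasure lam) fun n => ?_
  · rw [ae_map_iff hS.aemeasurable measurableSet_Ici]
    exact .of_forall fun ω => tsum_nonneg (zpow_two_mul_nonneg_of_eq_zero_or_one hval · ω)
  · have hn : -(n : ℝ) ≤ 0 := neg_nonpos.mpr n.cast_nonneg
    rw [mgf_id_map hS.aemeasurable, mgf_id_expMeasure hlam (hn.trans_lt hlam),
      mgf_tsum_zpow_two_mul_of_bernoulli hlam hmeas hval hindep hber hsum hn]
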